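/- arXiv:1408.3866 — 4 statements merged into one kernel-verified Lean document; each statement's English description precedes it below -/
import Mathlib

section
/- Let ε > 0 and let Q₁, …, Q_ℓ and R be pairwise disjoint vertex sets in a finite simple graph such that for each i ∈ [ℓ] the pair (R, Q_i) is ε-regular. Then: (a) all but at most ε|R| vertices v ∈ R satisfy deg(v, ⋃_i Q_i) ≥ e(R, ⋃_i Q_i)/|R| − ε·|⋃_i Q_i|; and (b) all but at most ε|R| vertices v ∈ R satisfy deg(v, ⋃_i Q_i) ≤ e(R, ⋃_i Q_i)/|R| + ε·|⋃_i Q_i|. -/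
open Finset

/-- The number of neighbours of `v` inside the set `U`, in the graph `G`. -/
noncomputable def deg {V : Type} (G : SimpleGraph V) (v : V) (U : Finset V) : ℕ :=
  ({w | w ∈ U ∧ G.Adj v w} : Set V).ncard

/-- The number of ordered pairs `(x, y) ∈ X × Y` with `xy` an edge of `G`. -/
noncomputable def epairs {V : Type} (G : SimpleGraph V) (X Y : Finset V) : ℕ :=
  ({p : V × V | p.1 ∈ X ∧ p.2 ∈ Y ∧ G.Adj p.1 p.2} : Set (V × V)).ncard

/-- The density of a pair of vertex sets. -/
noncomputable def density {V : Type} (G : SimpleGraph V) (X Y : Finset V) : ℝ :=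
  (epairs G X Y : ℝ) / ((X.card : ℝ) * (Y.card : ℝ))

/-- The pair `(U, W)` is `ε`-regular. -/
def IsRegularPair {V : Type} (G : SimpleGraph V) (ε : ℝ) (U W : Finset V) : Prop :=
  ∀ U' ⊆ U, ∀ W' ⊆ W, ε * (U.card : ℝ) ≤ (U'.card : ℝ) → ε * (W.card : ℝ) ≤ (W'.card : ℝ) →
    |density G U W - density G U' W'| < ε

lemma deg_eq_card {V : Type} (G : SimpleGraph V) [DecidableRel G.Adj] (v : V) (U : Finset V) :
    deg G v U = (U.filter (fun w => G.Adj v w)).card := by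
  rw [deg, show {w | w ∈ U ∧ G.Adj v w} = ↑(U.filter (fun w => G.Adj v w)) by ext w; simp,
    Set.ncard_coe_finset]

lemma epairs_eq_sum {V : Type} [DecidableEq V] (G : SimpleGraph V) [DecidableRel G.Adj]
    (X Y : Finset V) : epairs G X Y = ∑ v ∈ X, deg G v Y := by
  rw [epairs, show {p : V × V | p.1 ∈ X ∧ p.2 ∈ Y ∧ G.Adj p.1 p.2}
      = ↑((X ×ˢ Y).filter (fun p => G.Adj p.1 p.2)) by
        ext p; simp [Finset.mem_product, and_assoc],
    Set.ncard_coe_finset]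
  rw [Finset.card_eq_sum_card_fiberwise (f := Prod.fst) (t := X)
    (by intro p hp; simp only [Finset.mem_coe, Finset.mem_filter, Finset.mem_product] at hp; exact hp.1.1)]
  refine Finset.sum_congr rfl fun x hx => ?_
  rw [deg_eq_card]
  apply Finset.card_bij (fun p _ => p.2)
  · intro p hp
    simp only [Finset.mem_filter, Finset.mem_product] at hp
    obtain ⟨⟨⟨h1, h2⟩, h3⟩, h4⟩ := hp
    exact Finset.mem_filter.mpr ⟨h2, h4 ▸ h3⟩
  · intro p hp q hq h
    simp only [Finset.mem_filter] at hp hq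
    exact Prod.ext (hp.2.trans hq.2.symm) h
  · intro w hw
    simp only [Finset.mem_filter] at hw
    exact ⟨(x, w), by simp [Finset.mem_filter, Finset.mem_product, hx, hw.1, hw.2], rfl⟩

lemma deg_biUnion {V : Type} [DecidableEq V] (G : SimpleGraph V) [DecidableRel G.Adj] (v : V)
    {ℓ : ℕ} (Q : Fin ℓ → Finset V) (hQQ : ∀ i j : Fin ℓ, i ≠ j → Disjoint (Q i) (Q j)) :
    deg G v ((univ : Finset (Fin ℓ)).biUnion Q) = ∑ i, deg G v (Q i) := by
  simp only [deg_eq_card, Finset.filter_biUnion]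
  exact Finset.card_biUnion fun i _ j _ hij =>
    (hQQ i j hij).mono (Finset.filter_subset _ _) (Finset.filter_subset _ _)

lemma epairs_biUnion {V : Type} [DecidableEq V] (G : SimpleGraph V) [DecidableRel G.Adj]
    (X : Finset V) {ℓ : ℕ} (Q : Fin ℓ → Finset V)
    (hQQ : ∀ i j : Fin ℓ, i ≠ j → Disjoint (Q i) (Q j)) :
    epairs G X ((univ : Finset (Fin ℓ)).biUnion Q) = ∑ i, epairs G X (Q i) := by
  simp only [epairs_eq_sum]
  rw [Finset.sum_comm]
  exact Finset.sum_congr rfl fun v _ => deg_biUnion G v Q hQQ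

lemma key1 {V : Type} [DecidableEq V] (G : SimpleGraph V) [DecidableRel G.Adj] {ε : ℝ}
    (hε : 0 < ε) (hε1 : ε ≤ 1) {R B Qi : Finset V} (hB : B ⊆ R)
    (hBcard : ε * (R.card : ℝ) ≤ (B.card : ℝ)) (hreg : IsRegularPair G ε R Qi) :
    |(epairs G R Qi : ℝ) * B.card / R.card - epairs G B Qi| ≤ ε * B.card * Qi.card := by
  rcases Nat.eq_zero_or_pos Qi.card with h0 | hq
  · have hQ : Qi = ∅ := Finset.card_eq_zero.mp h0
    subst hQ
    simp [epairs_eq_sum, deg_eq_card]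
  rcases Nat.eq_zero_or_pos R.card with h0 | hr
  · have hR : R = ∅ := Finset.card_eq_zero.mp h0
    subst hR
    have hB' : B = ∅ := Finset.subset_empty.mp hB
    subst hB'
    simp [epairs_eq_sum]
  have hrR : (0:ℝ) < R.card := by exact_mod_cast hr
  have hbB : (0:ℝ) < B.card := lt_of_lt_of_le (by positivity) hBcard
  have hqQ : (0:ℝ) < Qi.card := by exact_mod_cast hq
  have h := hreg B hB Qi (subset_refl _) hBcard
    (by nlinarith : ε * (Qi.card : ℝ) ≤ (Qi.card : ℝ))
  have e1 : (density G R Qi - density G B Qi) * ((B.card : ℝ) * Qi.card)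
      = (epairs G R Qi : ℝ) * B.card / R.card - epairs G B Qi := by
    unfold density; field_simp
  calc |(epairs G R Qi : ℝ) * B.card / R.card - epairs G B Qi|
      = |(density G R Qi - density G B Qi) * ((B.card : ℝ) * Qi.card)| := by rw [e1]
    _ = |density G R Qi - density G B Qi| * ((B.card : ℝ) * Qi.card) := by
        rw [abs_mul, abs_of_nonneg (show (0:ℝ) ≤ (B.card : ℝ) * Qi.card by positivity)]
    _ ≤ ε * ((B.card : ℝ) * Qi.card) := by
        apply mul_le_mul_of_nonneg_right h.le (by positivity)
    _ = ε * B.card * Qi.card := by ring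

lemma key2 {V : Type} [DecidableEq V] (G : SimpleGraph V) [DecidableRel G.Adj] {ε : ℝ}
    (hε : 0 < ε) (hε1 : ε ≤ 1) {ℓ : ℕ} {Q : Fin ℓ → Finset V} {R B : Finset V} (hB : B ⊆ R)
    (hBcard : ε * (R.card : ℝ) ≤ (B.card : ℝ))
    (hQQ : ∀ i j : Fin ℓ, i ≠ j → Disjoint (Q i) (Q j))
    (hreg : ∀ i : Fin ℓ, IsRegularPair G ε R (Q i)) :
    |(epairs G R ((univ : Finset (Fin ℓ)).biUnion Q) : ℝ) * B.card / R.card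
      - epairs G B ((univ : Finset (Fin ℓ)).biUnion Q)|
      ≤ ε * B.card * (((univ : Finset (Fin ℓ)).biUnion Q).card : ℝ) := by
  rw [epairs_biUnion G R Q hQQ, epairs_biUnion G B Q hQQ,
    Finset.card_biUnion fun i _ j _ hij => hQQ i j hij]
  push_cast
  rw [Finset.sum_mul, Finset.sum_div, ← Finset.sum_sub_distrib]
  calc |∑ i, ((epairs G R (Q i) : ℝ) * B.card / R.card - epairs G B (Q i))|
      ≤ ∑ i, |(epairs G R (Q i) : ℝ) * B.card / R.card - epairs G B (Q i)| :=
        Finset.abs_sum_le_sum_abs _ _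
    _ ≤ ∑ i, ε * B.card * ((Q i).card : ℝ) :=
        Finset.sum_le_sum fun i _ => key1 G hε hε1 hB hBcard (hreg i)
    _ = ε * B.card * ∑ i, ((Q i).card : ℝ) := by rw [Finset.mul_sum]

theorem degree_into_many_pairs {V : Type} [Fintype V] [DecidableEq V]
    (G : SimpleGraph V) (ε : ℝ) (hε : 0 < ε) (ℓ : ℕ) (Q : Fin ℓ → Finset V) (R : Finset V)
    (hQQ : ∀ i j : Fin ℓ, i ≠ j → Disjoint (Q i) (Q j))
    (hRQ : ∀ i : Fin ℓ, Disjoint R (Q i))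
    (hreg : ∀ i : Fin ℓ, IsRegularPair G ε R (Q i)) :
    (({v : V | v ∈ R ∧ (deg G v ((univ : Finset (Fin ℓ)).biUnion Q) : ℝ) <
        (epairs G R ((univ : Finset (Fin ℓ)).biUnion Q) : ℝ) / (R.card : ℝ) -
          ε * (((univ : Finset (Fin ℓ)).biUnion Q).card : ℝ)}).ncard : ℝ)
      ≤ ε * (R.card : ℝ)
    ∧
    (({v : V | v ∈ R ∧ (epairs G R ((univ : Finset (Fin ℓ)).biUnion Q) : ℝ) / (R.card : ℝ) +
          ε * (((univ : Finset (Fin ℓ)).biUnion Q).card : ℝ) <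
        (deg G v ((univ : Finset (Fin ℓ)).biUnion Q) : ℝ)}).ncard : ℝ)
      ≤ ε * (R.card : ℝ) := by
  classical
  set Qu := (univ : Finset (Fin ℓ)).biUnion Q with hQu
  set D : ℝ := (epairs G R Qu : ℝ) / (R.card : ℝ) with hD
  set q : ℝ := (Qu.card : ℝ) with hq
  constructor
  · set B := R.filter (fun v => (deg G v Qu : ℝ) < D - ε * q) with hBdef
    have hset : {v : V | v ∈ R ∧ (deg G v Qu : ℝ) < D - ε * q} = ↑B := by
      ext v; simp [hBdef]
    rw [hset, Set.ncard_coe_finset]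
    rcases le_or_gt ε 1 with hε1 | hε1
    swap
    · have h1 : (B.card : ℝ) ≤ (R.card : ℝ) := by
        exact_mod_cast Finset.card_le_card (Finset.filter_subset _ _)
      nlinarith [Nat.cast_nonneg (α := ℝ) R.card]
    by_contra hcon
    push_neg at hcon
    have hBR : B ⊆ R := Finset.filter_subset _ _
    have hBcard : ε * (R.card : ℝ) ≤ (B.card : ℝ) := hcon.le
    have hBpos : 0 < B.card := by
      have h0 : (0:ℝ) < (B.card : ℝ) :=
        lt_of_le_of_lt (mul_nonneg hε.le (Nat.cast_nonneg _)) hcon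
      exact_mod_cast h0
    have hBne : B.Nonempty := Finset.card_pos.mp hBpos
    have hkey := key2 G hε hε1 hBR hBcard hQQ hreg
    have hsum : (epairs G B Qu : ℝ) < (B.card : ℝ) * (D - ε * q) := by
      rw [epairs_eq_sum]
      push_cast
      calc ∑ v ∈ B, (deg G v Qu : ℝ) < ∑ v ∈ B, (D - ε * q) :=
            Finset.sum_lt_sum_of_nonempty hBne fun v hv => (Finset.mem_filter.mp hv).2
        _ = (B.card : ℝ) * (D - ε * q) := by rw [Finset.sum_const, nsmul_eq_mul]
    have hlow : (D * B.card - ε * B.card * q : ℝ) ≤ epairs G B Qu := by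
      have := abs_le.mp hkey
      have h' := this.1
      rw [hD]
      have : (epairs G R Qu : ℝ) * B.card / R.card - ε * B.card * q ≤ epairs G B Qu := by
        linarith
      calc (epairs G R Qu : ℝ) / R.card * B.card - ε * B.card * q
          = (epairs G R Qu : ℝ) * B.card / R.card - ε * B.card * q := by ring
        _ ≤ epairs G B Qu := this
    nlinarith
  · set B := R.filter (fun v => D + ε * q < (deg G v Qu : ℝ)) with hBdef
    have hset : {v : V | v ∈ R ∧ D + ε * q < (deg G v Qu : ℝ)} = ↑B := by
      ext v; simp [hBdef]
    rw [hset, Set.ncard_coe_finset]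
    rcases le_or_gt ε 1 with hε1 | hε1
    swap
    · have h1 : (B.card : ℝ) ≤ (R.card : ℝ) := by
        exact_mod_cast Finset.card_le_card (Finset.filter_subset _ _)
      nlinarith [Nat.cast_nonneg (α := ℝ) R.card]
    by_contra hcon
    push_neg at hcon
    have hBR : B ⊆ R := Finset.filter_subset _ _
    have hBcard : ε * (R.card : ℝ) ≤ (B.card : ℝ) := hcon.le
    have hBpos : 0 < B.card := by
      have h0 : (0:ℝ) < (B.card : ℝ) :=
        lt_of_le_of_lt (mul_nonneg hε.le (Nat.cast_nonneg _)) hcon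
      exact_mod_cast h0
    have hBne : B.Nonempty := Finset.card_pos.mp hBpos
    have hkey := key2 G hε hε1 hBR hBcard hQQ hreg
    have hsum : (B.card : ℝ) * (D + ε * q) < (epairs G B Qu : ℝ) := by
      rw [epairs_eq_sum]
      push_cast
      calc (B.card : ℝ) * (D + ε * q) = ∑ v ∈ B, (D + ε * q) := by
            rw [Finset.sum_const, nsmul_eq_mul]
        _ < ∑ v ∈ B, (deg G v Qu : ℝ) :=
            Finset.sum_lt_sum_of_nonempty hBne fun v hv => (Finset.mem_filter.mp hv).2
    have hhigh : (epairs G B Qu : ℝ) ≤ D * B.card + ε * B.card * q := by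
      have := abs_le.mp hkey
      have h' := this.2
      rw [hD]
      calc (epairs G B Qu : ℝ) ≤ (epairs G R Qu : ℝ) * B.card / R.card + ε * B.card * q := by
            linarith
        _ = (epairs G R Qu : ℝ) / R.card * B.card + ε * B.card * q := by ring
    nlinarith
end

section
/- Let α, γ, Q > 0 be numbers such that Q ≥ 1 and 16Q ≤ α/γ, and let k be a positive integer. Suppose that H is a (γk, γ)-nowhere-dense finite simple graph, and let U ⊆ V(H) with |U| ≤ Q·k. Then |shadow_H(U, αk)| ≤ (16Q²γ/α)·k. -/
/-- An `(m, γ)`-dense spot in `G`: a non-empty bipartite subgraph `(U, W; F)` of `G`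
with density greater than `γ` and every vertex of `U ∪ W` incident to more than `m`
edges of `F`. -/
def IsDenseSpot {V : Type} [DecidableEq V] (G : SimpleGraph V) (m γ : ℝ)
    (U W : Finset V) (F : Finset (Sym2 V)) : Prop :=
  Disjoint U W ∧ F.Nonempty ∧
  (∀ e ∈ F, e ∈ G.edgeSet) ∧
  (∀ e ∈ F, ∃ u ∈ U, ∃ w ∈ W, e = s(u, w)) ∧
  γ * ((U.card : ℝ) * (W.card : ℝ)) < (F.card : ℝ) ∧
  (∀ v ∈ U ∪ W, m < (({e | e ∈ F ∧ v ∈ e} : Set (Sym2 V)).ncard : ℝ))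

/-- A graph is `(m, γ)`-nowhere-dense if it contains no `(m, γ)`-dense spot. -/
def NowhereDenseGraph {V : Type} [DecidableEq V] (G : SimpleGraph V) (m γ : ℝ) : Prop :=
  ¬ ∃ (U W : Finset V) (F : Finset (Sym2 V)), IsDenseSpot G m γ U W F

/-- The shadow of a vertex set `U`: the set of vertices with more than `ℓ`
neighbours in `U`. -/
def shadow {V : Type} (G : SimpleGraph V) (U : Set V) (ℓ : ℝ) : Set V :=
  {v | ℓ < ((U ∩ {w | G.Adj v w}).ncard : ℝ)}


open Finset in
private lemma cleaning {V : Type} [DecidableEq V] (m : ℕ) :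
    ∀ (n : ℕ) (A B : Finset V) (P : Finset (V × V)), A.card + B.card ≤ n →
    P ⊆ A ×ˢ B →
    ∃ (A' B' : Finset V) (P' : Finset (V × V)), A' ⊆ A ∧ B' ⊆ B ∧ P' ⊆ P ∧
      P' ⊆ A' ×ˢ B' ∧
      (∀ v ∈ A', m < (P'.filter (fun p => p.1 = v)).card) ∧
      (∀ v ∈ B', m < (P'.filter (fun p => p.2 = v)).card) ∧
      P.card ≤ P'.card + m * (A.card + B.card) := by
  intro n
  induction n with
  | zero =>
    intro A B P hn hP
    refine ⟨A, B, P, subset_rfl, subset_rfl, subset_rfl, hP, ?_, ?_, Nat.le_add_right _ _⟩ <;>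
    · intro v hv
      exfalso
      have : 0 < A.card + B.card := by
        have := Finset.card_pos.2 ⟨v, hv⟩
        omega
      omega
  | succ n ih =>
    intro A B P hn hP
    by_cases hA : ∃ v ∈ A, (P.filter (fun p => p.1 = v)).card ≤ m
    · obtain ⟨v, hvA, hdeg⟩ := hA
      have hcard : (A.erase v).card + B.card ≤ n := by
        have := Finset.card_erase_of_mem hvA
        have : 0 < A.card := Finset.card_pos.2 ⟨v, hvA⟩
        omega
      have hsub : P.filter (fun p => ¬ p.1 = v) ⊆ (A.erase v) ×ˢ B := by
        intro p hp
        rw [Finset.mem_filter] at hp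
        have := hP hp.1
        rw [Finset.mem_product] at this ⊢
        exact ⟨Finset.mem_erase.2 ⟨hp.2, this.1⟩, this.2⟩
      obtain ⟨A', B', P', h1, h2, h3, h4, h5, h6, h7⟩ := ih (A.erase v) B _ hcard hsub
      refine ⟨A', B', P', h1.trans (Finset.erase_subset _ _), h2,
        h3.trans (Finset.filter_subset _ _), h4, h5, h6, ?_⟩
      have hsplit := Finset.card_filter_add_card_filter_not
        (s := P) (p := fun p => p.1 = v)
      have he : (A.erase v).card + 1 = A.card := by
        have := Finset.card_erase_of_mem hvA
        have : 0 < A.card := Finset.card_pos.2 ⟨v, hvA⟩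
        omega
      have : P.card ≤ P'.card + m * ((A.erase v).card + B.card) + m := by omega
      calc P.card ≤ P'.card + m * ((A.erase v).card + B.card) + m := this
        _ = P'.card + m * ((A.erase v).card + B.card + 1) := by ring
        _ = P'.card + m * (A.card + B.card) := by rw [show (A.erase v).card + B.card + 1
              = A.card + B.card by omega]
    · by_cases hB : ∃ v ∈ B, (P.filter (fun p => p.2 = v)).card ≤ m
      · obtain ⟨v, hvB, hdeg⟩ := hB
        have hcard : A.card + (B.erase v).card ≤ n := by
          have := Finset.card_erase_of_mem hvB
          have : 0 < B.card := Finset.card_pos.2 ⟨v, hvB⟩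
          omega
        have hsub : P.filter (fun p => ¬ p.2 = v) ⊆ A ×ˢ (B.erase v) := by
          intro p hp
          rw [Finset.mem_filter] at hp
          have := hP hp.1
          rw [Finset.mem_product] at this ⊢
          exact ⟨this.1, Finset.mem_erase.2 ⟨hp.2, this.2⟩⟩
        obtain ⟨A', B', P', h1, h2, h3, h4, h5, h6, h7⟩ := ih A (B.erase v) _ hcard hsub
        refine ⟨A', B', P', h1, h2.trans (Finset.erase_subset _ _),
          h3.trans (Finset.filter_subset _ _), h4, h5, h6, ?_⟩
        have hsplit := Finset.card_filter_add_card_filter_not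
          (s := P) (p := fun p => p.2 = v)
        have he : (B.erase v).card + 1 = B.card := by
          have := Finset.card_erase_of_mem hvB
          have : 0 < B.card := Finset.card_pos.2 ⟨v, hvB⟩
          omega
        have : P.card ≤ P'.card + m * (A.card + (B.erase v).card) + m := by omega
        calc P.card ≤ P'.card + m * (A.card + (B.erase v).card) + m := this
          _ = P'.card + m * (A.card + (B.erase v).card + 1) := by ring
          _ = P'.card + m * (A.card + B.card) := by rw [show A.card + (B.erase v).card + 1
                = A.card + B.card by omega]
      · push_neg at hA hB
        exact ⟨A, B, P, subset_rfl, subset_rfl, subset_rfl, hP, hA, hB, Nat.le_add_right _ _⟩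

open Finset in
private lemma maxcut {V : Type} [DecidableEq V] (H : SimpleGraph V) [DecidableRel H.Adj]
    (T : Finset V) :
    ∃ A ⊆ T,
      (∀ v ∈ A, (T.filter (H.Adj v)).card ≤ 2 * ((T \ A).filter (H.Adj v)).card) ∧
      (∀ v ∈ T \ A, (T.filter (H.Adj v)).card ≤ 2 * (A.filter (H.Adj v)).card) := by
  set cut : Finset V → ℕ := fun A => ∑ v ∈ A, ((T \ A).filter (H.Adj v)).card with hcut
  obtain ⟨A, hAmem, hAmax⟩ := T.powerset.exists_max_image cut ⟨∅, by simp⟩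
  rw [Finset.mem_powerset] at hAmem
  have hsplit : ∀ v : V, (T.filter (H.Adj v)).card
      = (A.filter (H.Adj v)).card + ((T \ A).filter (H.Adj v)).card := by
    intro v
    rw [← Finset.card_union_of_disjoint
      (Finset.disjoint_filter_filter (Finset.disjoint_sdiff)), ← Finset.filter_union,
      Finset.union_sdiff_of_subset hAmem]
  refine ⟨A, hAmem, ?_, ?_⟩
  · intro v hvA
    have hvT : v ∈ T := hAmem hvA
    have hTdiff : T \ A.erase v = insert v (T \ A) := by
      ext w
      simp only [Finset.mem_sdiff, Finset.mem_erase, Finset.mem_insert]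
      constructor
      · rintro ⟨hwT, hw⟩
        by_cases hwv : w = v
        · exact Or.inl hwv
        · exact Or.inr ⟨hwT, fun hwA => hw ⟨hwv, hwA⟩⟩
      · rintro (rfl | ⟨hwT, hwA⟩)
        · exact ⟨hvT, fun h => h.1 rfl⟩
        · exact ⟨hwT, fun h => hwA h.2⟩
    have hterm : ∀ w ∈ A.erase v, ((T \ A.erase v).filter (H.Adj w)).card
        = ((T \ A).filter (H.Adj w)).card + (if H.Adj w v then 1 else 0) := by
      intro w _
      rw [hTdiff, Finset.filter_insert]
      split_ifs with h
      · rw [Finset.card_insert_of_notMem (by simp [hvA])]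
      · rfl
    have hAe : (A.erase v).filter (fun w => H.Adj w v) = A.filter (H.Adj v) := by
      ext w
      simp only [Finset.mem_filter, Finset.mem_erase]
      constructor
      · rintro ⟨⟨_, hw⟩, ha⟩; exact ⟨hw, ha.symm⟩
      · rintro ⟨hw, ha⟩; exact ⟨⟨fun h => H.irrefl (h ▸ ha), hw⟩, ha.symm⟩
    have h1 : cut (A.erase v)
        = ∑ w ∈ A.erase v, ((T \ A).filter (H.Adj w)).card
          + (A.filter (H.Adj v)).card := by
      have h1' : ∑ w ∈ A.erase v, ((T \ A.erase v).filter (H.Adj w)).card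
          = ∑ w ∈ A.erase v, (((T \ A).filter (H.Adj w)).card
            + (if H.Adj w v then 1 else 0)) := Finset.sum_congr rfl hterm
      rw [hcut]
      simp only
      rw [h1', Finset.sum_add_distrib, ← Finset.card_filter, hAe]
    have h2 : cut A = ∑ w ∈ A.erase v, ((T \ A).filter (H.Adj w)).card
        + ((T \ A).filter (H.Adj v)).card := by
      rw [hcut]
      simp only
      rw [← Finset.sum_erase_add _ _ hvA]
    have hle : cut (A.erase v) ≤ cut A :=
      hAmax _ (Finset.mem_powerset.2 ((Finset.erase_subset _ _).trans hAmem))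
    rw [hsplit v]
    omega
  · intro v hvB
    have hvT : v ∈ T := (Finset.mem_sdiff.1 hvB).1
    have hvA : v ∉ A := (Finset.mem_sdiff.1 hvB).2
    have hTdiff : T \ insert v A = (T \ A).erase v := by
      ext w
      simp only [Finset.mem_sdiff, Finset.mem_erase, Finset.mem_insert]
      tauto
    have hterm : ∀ w ∈ A, ((T \ A).filter (H.Adj w)).card
        = (((T \ A).erase v).filter (H.Adj w)).card + (if H.Adj w v then 1 else 0) := by
      intro w _
      split_ifs with h
      · rw [Finset.filter_erase, Finset.card_erase_of_mem (by
          simp only [Finset.mem_filter]; exact ⟨hvB, h⟩)]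
        have : 0 < ((T \ A).filter (H.Adj w)).card :=
          Finset.card_pos.2 ⟨v, by simp only [Finset.mem_filter]; exact ⟨hvB, h⟩⟩
        omega
      · rw [Finset.filter_erase, Finset.erase_eq_of_notMem (by
          simp only [Finset.mem_filter]; exact fun hc => h hc.2), Nat.add_zero]
    have hAe : A.filter (fun w => H.Adj w v) = A.filter (H.Adj v) := by
      ext w
      simp only [Finset.mem_filter]
      exact ⟨fun ⟨h1, h2⟩ => ⟨h1, h2.symm⟩, fun ⟨h1, h2⟩ => ⟨h1, h2.symm⟩⟩
    have hve : ((T \ A).erase v).filter (H.Adj v) = (T \ A).filter (H.Adj v) := by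
      rw [Finset.filter_erase, Finset.erase_eq_of_notMem (by
        simp only [Finset.mem_filter]; exact fun hc => H.irrefl hc.2)]
    have h1 : cut (insert v A)
        = ((T \ A).filter (H.Adj v)).card
          + ∑ w ∈ A, (((T \ A).erase v).filter (H.Adj w)).card := by
      rw [hcut]
      simp only
      rw [Finset.sum_insert hvA, hTdiff, hve]
    have h2 : cut A = ∑ w ∈ A, (((T \ A).erase v).filter (H.Adj w)).card
        + (A.filter (H.Adj v)).card := by
      have h2' : ∑ w ∈ A, ((T \ A).filter (H.Adj w)).card
          = ∑ w ∈ A, ((((T \ A).erase v).filter (H.Adj w)).card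
            + (if H.Adj w v then 1 else 0)) := Finset.sum_congr rfl hterm
      rw [hcut]
      simp only
      rw [h2', Finset.sum_add_distrib, ← Finset.card_filter, hAe]
    have hle : cut (insert v A) ≤ cut A := by
      refine hAmax _ (Finset.mem_powerset.2 ?_)
      intro w hw
      rcases Finset.mem_insert.1 hw with rfl | hw
      · exact hvT
      · exact hAmem hw
    rw [hsplit v]
    omega

open Finset in
set_option maxHeartbeats 1000000 in
theorem shadow_bound_nowhere_dense {V : Type} [Fintype V] [DecidableEq V]
    (α γ Q : ℝ) (hα : 0 < α) (hγ : 0 < γ) (hQpos : 0 < Q) (hQ : 1 ≤ Q)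
    (h16 : 16 * Q ≤ α / γ) (k : ℕ) (hk : 0 < k)
    (H : SimpleGraph V) (hnd : NowhereDenseGraph H (γ * k) γ)
    (U : Set V) (hU : (U.ncard : ℝ) ≤ Q * k) :
    ((shadow H U (α * k)).ncard : ℝ) ≤ 16 * Q ^ 2 * γ / α * k := by
  classical
  letI : DecidableRel H.Adj := Classical.decRel _
  by_contra hcon
  push_neg at hcon
  set L : Finset V := (shadow H U (α * k)).toFinset with hLdef
  set U' : Finset V := U.toFinset with hU'def
  have hLcard : ((shadow H U (α * k)).ncard : ℝ) = L.card := by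
    rw [hLdef, Set.ncard_eq_toFinset_card']
  have hU'card : ((U'.card : ℕ) : ℝ) ≤ Q * k := by
    rw [hU'def, ← Set.ncard_eq_toFinset_card']; exact hU
  have hk1 : (1 : ℝ) ≤ k := by exact_mod_cast hk
  have hα16 : 16 * Q * γ ≤ α := by
    rw [le_div_iff₀ hγ] at h16; linarith
  have hc0 : (0:ℝ) ≤ 16 * Q ^ 2 * γ / α * k := by positivity
  set n : ℕ := ⌊16 * Q ^ 2 * γ / α * k⌋₊ + 1 with hndef
  have hnL : n ≤ L.card := by
    have h1 : 16 * Q ^ 2 * γ / α * k < (L.card : ℝ) := by rw [← hLcard]; exact hcon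
    have := (Nat.floor_lt hc0).2 h1
    omega
  obtain ⟨S, hSL, hScard⟩ := L.exists_subset_card_eq hnL
  have hn1 : 1 ≤ n := Nat.le_add_left 1 _
  have hSne : S.Nonempty := Finset.card_pos.1 (by omega)
  -- shadow degrees
  have hdegU : ∀ v ∈ S, α * k < ((U'.filter (H.Adj v)).card : ℝ) := by
    intro v hv
    have hv' : v ∈ shadow H U (α * k) := by
      have := hSL hv
      rw [hLdef, Set.mem_toFinset] at this
      exact this
    have hset : U ∩ {w | H.Adj v w} = ↑(U'.filter (H.Adj v)) := by
      ext w
      simp [hU'def, Set.mem_toFinset]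
    have hv2 : α * k < ((U ∩ {w | H.Adj v w}).ncard : ℝ) := hv'
    rwa [hset, Set.ncard_coe_finset] at hv2
  set T : Finset V := S ∪ U' with hTdef
  have hST : S ⊆ T := Finset.subset_union_left
  have hUT : U' ⊆ T := Finset.subset_union_right
  obtain ⟨A, hAT, hcutA, hcutB⟩ := maxcut H T
  set B : Finset V := T \ A with hBdef
  set P : Finset (V × V) := (A ×ˢ B).filter (fun p => H.Adj p.1 p.2) with hPdef
  -- fiberwise counts
  have hfib1 : ∀ v ∈ A, (P.filter (fun p => p.1 = v)) = {v} ×ˢ (B.filter (H.Adj v)) := by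
    intro v hv
    ext ⟨a, b⟩
    simp only [hPdef, Finset.mem_filter, Finset.mem_product, Finset.mem_singleton]
    constructor
    · rintro ⟨⟨⟨h1, h2⟩, h3⟩, rfl⟩
      exact ⟨rfl, h2, h3⟩
    · rintro ⟨rfl, h2, h3⟩
      exact ⟨⟨⟨hv, h2⟩, h3⟩, rfl⟩
  have hfib2 : ∀ v ∈ B, (P.filter (fun p => p.2 = v)) = (A.filter (H.Adj v)) ×ˢ {v} := by
    intro v hv
    ext ⟨a, b⟩
    simp only [hPdef, Finset.mem_filter, Finset.mem_product, Finset.mem_singleton]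
    constructor
    · rintro ⟨⟨⟨h1, h2⟩, h3⟩, rfl⟩
      exact ⟨⟨h1, h3.symm⟩, rfl⟩
    · rintro ⟨⟨h1, h2⟩, rfl⟩
      exact ⟨⟨⟨h1, hv⟩, h2.symm⟩, rfl⟩
  have hP1 : P.card = ∑ v ∈ A, (B.filter (H.Adj v)).card := by
    rw [Finset.card_eq_sum_card_fiberwise
      (f := Prod.fst) (t := A)
      (fun p hp => ((Finset.mem_product).1 (Finset.mem_filter.1 hp).1).1)]
    exact Finset.sum_congr rfl fun v hv => by
      rw [hfib1 v hv, Finset.card_product, Finset.card_singleton, one_mul]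
  have hP2 : P.card = ∑ v ∈ B, (A.filter (H.Adj v)).card := by
    rw [Finset.card_eq_sum_card_fiberwise
      (f := Prod.snd) (t := B)
      (fun p hp => ((Finset.mem_product).1 (Finset.mem_filter.1 hp).1).2)]
    exact Finset.sum_congr rfl fun v hv => by
      rw [hfib2 v hv, Finset.card_product, Finset.card_singleton, mul_one]
  -- sum of degrees of S inside T is at most 4 |P|
  have key1 : ∑ v ∈ S, (T.filter (H.Adj v)).card ≤ 4 * P.card := by
    rw [← Finset.sum_filter_add_sum_filter_not S (· ∈ A)]
    have hA' : ∑ v ∈ S.filter (· ∈ A), (T.filter (H.Adj v)).card ≤ 2 * P.card := by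
      calc ∑ v ∈ S.filter (· ∈ A), (T.filter (H.Adj v)).card
          ≤ ∑ v ∈ S.filter (· ∈ A), 2 * ((T \ A).filter (H.Adj v)).card :=
            Finset.sum_le_sum fun v hv => hcutA v (Finset.mem_filter.1 hv).2
        _ = 2 * ∑ v ∈ S.filter (· ∈ A), (B.filter (H.Adj v)).card := by
            rw [Finset.mul_sum]
        _ ≤ 2 * ∑ v ∈ A, (B.filter (H.Adj v)).card := by
            apply Nat.mul_le_mul_left
            exact Finset.sum_le_sum_of_subset
              (fun v hv => (Finset.mem_filter.1 hv).2)
        _ = 2 * P.card := by rw [hP1]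
    have hB' : ∑ v ∈ S.filter (· ∉ A), (T.filter (H.Adj v)).card ≤ 2 * P.card := by
      calc ∑ v ∈ S.filter (· ∉ A), (T.filter (H.Adj v)).card
          ≤ ∑ v ∈ S.filter (· ∉ A), 2 * (A.filter (H.Adj v)).card :=
            Finset.sum_le_sum fun v hv => by
              refine hcutB v ?_
              rw [Finset.mem_sdiff]
              exact ⟨hST (Finset.mem_filter.1 hv).1, (Finset.mem_filter.1 hv).2⟩
        _ = 2 * ∑ v ∈ S.filter (· ∉ A), (A.filter (H.Adj v)).card := by
            rw [Finset.mul_sum]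
        _ ≤ 2 * ∑ v ∈ B, (A.filter (H.Adj v)).card := by
            apply Nat.mul_le_mul_left
            refine Finset.sum_le_sum_of_subset (fun v hv => ?_)
            rw [hBdef, Finset.mem_sdiff]
            exact ⟨hST (Finset.mem_filter.1 hv).1, (Finset.mem_filter.1 hv).2⟩
        _ = 2 * P.card := by rw [hP2]
    omega
  -- real lower bound on |P|
  have hPlow : (n : ℝ) * (α * k) < 4 * (P.card : ℝ) := by
    have h2 : (S.card : ℝ) * (α * k) < ∑ v ∈ S, ((T.filter (H.Adj v)).card : ℝ) := by
      have := Finset.sum_lt_sum_of_nonempty hSne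
        (f := fun _ => α * k) (g := fun v => ((T.filter (H.Adj v)).card : ℝ))
        (fun v hv => by
          have hle : (U'.filter (H.Adj v)).card ≤ (T.filter (H.Adj v)).card :=
            Finset.card_le_card (Finset.filter_subset_filter _ hUT)
          have hle2 : ((U'.filter (H.Adj v)).card : ℝ)
              ≤ ((T.filter (H.Adj v)).card : ℝ) := by exact_mod_cast hle
          exact lt_of_lt_of_le (hdegU v hv) hle2)
      rwa [Finset.sum_const, nsmul_eq_mul] at this
    have h3 : (∑ v ∈ S, ((T.filter (H.Adj v)).card : ℝ)) ≤ 4 * (P.card : ℝ) := by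
      push_cast
      exact_mod_cast key1
    rw [hScard] at h2
    linarith
  -- cleaning
  set m : ℕ := ⌊γ * k⌋₊ with hmdef
  obtain ⟨A', B', P', hA'A, hB'B, hP'P, hP'prod, hdegA, hdegB, hclean⟩ :=
    cleaning m (A.card + B.card) A B P le_rfl (Finset.filter_subset _ _)
  have hABT : A.card + B.card = T.card := by
    have h := Finset.card_sdiff_add_card_eq_card hAT
    rw [hBdef]
    omega
  have hTn : (T.card : ℝ) ≤ (n : ℝ) + (U'.card : ℝ) := by
    have := Finset.card_union_le S U'
    rw [hScard] at this
    exact_mod_cast this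
  -- numeric facts
  have hmr : (m : ℝ) ≤ γ * k := Nat.floor_le (by positivity)
  have hmr2 : γ * k < (m : ℝ) + 1 := Nat.lt_floor_add_one _
  have hnlow : 16 * Q ^ 2 * γ * k < (n : ℝ) * α := by
    have h1 : 16 * Q ^ 2 * γ / α * k < (n : ℝ) := by
      have := Nat.lt_floor_add_one (16 * Q ^ 2 * γ / α * k)
      push_cast [hndef]
      linarith
    have h2 : 16 * Q ^ 2 * γ * k / α < (n : ℝ) := by
      rw [div_mul_eq_mul_div] at h1; exact h1
    exact (div_lt_iff₀ hα).1 h2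
  have hnup : (n : ℝ) ≤ Q * k + 1 := by
    have h1 : ((⌊16 * Q ^ 2 * γ / α * k⌋₊ : ℕ) : ℝ) ≤ 16 * Q ^ 2 * γ / α * k :=
      Nat.floor_le hc0
    have h2 : 16 * Q ^ 2 * γ / α ≤ Q := by
      rw [div_le_iff₀ hα]; nlinarith
    have h3 : 16 * Q ^ 2 * γ / α * k ≤ Q * k := by
      apply mul_le_mul_of_nonneg_right h2 (by positivity)
    push_cast [hndef]
    linarith
  have hn1r : (1 : ℝ) ≤ (n : ℝ) := by exact_mod_cast hn1
  have hu0 : (0 : ℝ) ≤ (U'.card : ℝ) := by positivity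
  set nR : ℝ := (n : ℝ)
  set uR : ℝ := (U'.card : ℝ)
  -- the key inequality
  have key : γ * (nR + uR) ^ 2 + 4 * (γ * k * (nR + uR)) ≤ nR * α * k := by
    have e1 : 16 * Q ^ 2 * γ * k * k ≤ nR * α * k :=
      mul_le_mul_of_nonneg_right (le_of_lt hnlow) (by positivity)
    have e2 : 16 * Q * γ * (nR * k) ≤ nR * α * k := by
      calc 16 * Q * γ * (nR * k) ≤ α * (nR * k) :=
            mul_le_mul_of_nonneg_right hα16 (by positivity)
        _ = nR * α * k := by ring
    have f1 : (0:ℝ) ≤ γ * (nR * (Q * k - uR)) :=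
      mul_nonneg hγ.le (mul_nonneg (by linarith) (by linarith [hU'card]))
    have f2 : (0:ℝ) ≤ γ * ((Q * k - uR) * (Q * k + uR)) :=
      mul_nonneg hγ.le (mul_nonneg (by linarith [hU'card]) (by nlinarith))
    have f3 : (0:ℝ) ≤ γ * ((k:ℝ) * (Q * k - uR)) :=
      mul_nonneg hγ.le (mul_nonneg (by linarith) (by linarith [hU'card]))
    have f4 : (0:ℝ) ≤ γ * (nR * (Q * k + 1 - nR)) :=
      mul_nonneg hγ.le (mul_nonneg (by linarith) (by linarith))
    have f5 : (0:ℝ) ≤ γ * ((Q - 1) * (Q * k ^ 2)) :=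
      mul_nonneg hγ.le (mul_nonneg (by linarith) (by positivity))
    have f6 : (0:ℝ) ≤ γ * ((Q - 1) * ((k:ℝ) * nR)) :=
      mul_nonneg hγ.le (mul_nonneg (by linarith) (by nlinarith))
    have f7 : (0:ℝ) ≤ γ * (nR * ((k:ℝ) - 1)) :=
      mul_nonneg hγ.le (mul_nonneg (by linarith) (by linarith))
    have f8 : (0:ℝ) ≤ γ * (Q * (k:ℝ) ^ 2) := by positivity
    nlinarith [e1, e2, f1, f2, f3, f4, f5, f6, f7, f8]
  -- chain to density
  have hclean_real : (P.card : ℝ) ≤ (P'.card : ℝ) + (m : ℝ) * (T.card : ℝ) := by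
    rw [hABT] at hclean
    exact_mod_cast hclean
  have hmT : (m : ℝ) * (T.card : ℝ) ≤ γ * k * (nR + uR) := by
    apply mul_le_mul hmr hTn (by positivity) (by positivity)
  have hP'low : nR * (α * k) / 4 - γ * k * (nR + uR) < (P'.card : ℝ) := by
    linarith
  have habT : (A'.card : ℝ) + (B'.card : ℝ) ≤ nR + uR := by
    have h1 : A'.card + B'.card ≤ T.card := by
      have := Finset.card_le_card hA'A
      have := Finset.card_le_card hB'B
      omega
    have h2 : ((A'.card + B'.card : ℕ) : ℝ) ≤ (T.card : ℝ) := by exact_mod_cast h1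
    push_cast at h2
    linarith
  have hdens : γ * ((A'.card : ℝ) * (B'.card : ℝ)) < (P'.card : ℝ) := by
    have h4 : 4 * ((A'.card : ℝ) * (B'.card : ℝ)) ≤ (nR + uR) ^ 2 := by
      have ha0 : (0:ℝ) ≤ (A'.card : ℝ) := by positivity
      have hb0 : (0:ℝ) ≤ (B'.card : ℝ) := by positivity
      nlinarith [sq_nonneg ((A'.card : ℝ) - (B'.card : ℝ)), ha0, hb0, habT]
    nlinarith [mul_le_mul_of_nonneg_left h4 hγ.le]
  have hP'pos : 0 < P'.card := by
    have h0 : (0 : ℝ) ≤ γ * ((A'.card : ℝ) * (B'.card : ℝ)) := by positivity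
    have : (0:ℝ) < (P'.card : ℝ) := lt_of_le_of_lt h0 hdens
    exact_mod_cast this
  -- build the dense spot
  have hdisj : Disjoint A' B' := by
    refine Finset.disjoint_left.2 fun v hvA hvB => ?_
    have h1 : v ∈ A := hA'A hvA
    have h2 : v ∈ T \ A := hB'B hvB
    exact (Finset.mem_sdiff.1 h2).2 h1
  have hmemP' : ∀ p ∈ P', p.1 ∈ A' ∧ p.2 ∈ B' := fun p hp =>
    Finset.mem_product.1 (hP'prod hp)
  have hadjP' : ∀ p ∈ P', H.Adj p.1 p.2 := fun p hp =>
    (Finset.mem_filter.1 (hP'P hp)).2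
  set F : Finset (Sym2 V) := P'.image (fun p => s(p.1, p.2)) with hFdef
  have hinj : Set.InjOn (fun p : V × V => s(p.1, p.2)) ↑P' := by
    rintro ⟨a, b⟩ ha ⟨a2, b2⟩ hb h
    simp only [Sym2.eq_iff] at h
    rcases h with ⟨rfl, rfl⟩ | ⟨rfl, rfl⟩
    · rfl
    · exact absurd ((hmemP' _ (Finset.mem_coe.1 hb)).2)
        (Finset.disjoint_left.1 hdisj (hmemP' _ (Finset.mem_coe.1 ha)).1)
  have hFcard : F.card = P'.card := Finset.card_image_of_injOn hinj
  -- degree bound in F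
  have hdegF : ∀ v ∈ A' ∪ B',
      γ * k < ((({e | e ∈ F ∧ v ∈ e} : Set (Sym2 V)).ncard : ℕ) : ℝ) := by
    intro v hv
    have hset : ({e | e ∈ F ∧ v ∈ e} : Set (Sym2 V))
        = ↑(F.filter (fun e => v ∈ e)) := by
      ext e; simp
    rw [hset, Set.ncard_coe_finset]
    rcases Finset.mem_union.1 hv with hv' | hv'
    · have hsub : (P'.filter (fun p => p.1 = v)).image (fun p => s(p.1, p.2))
          ⊆ F.filter (fun e => v ∈ e) := by
        intro e he
        obtain ⟨p, hp, rfl⟩ := Finset.mem_image.1 he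
        rw [Finset.mem_filter] at hp ⊢
        exact ⟨Finset.mem_image_of_mem _ hp.1, hp.2 ▸ Sym2.mem_mk_left _ _⟩
      have hcard : ((P'.filter (fun p => p.1 = v)).image
          (fun p => s(p.1, p.2))).card = (P'.filter (fun p => p.1 = v)).card :=
        Finset.card_image_of_injOn (hinj.mono (by
          intro p hp
          exact Finset.mem_coe.2 (Finset.filter_subset _ _ (Finset.mem_coe.1 hp))))
      have h1 : m < (F.filter (fun e => v ∈ e)).card := by
        have := Finset.card_le_card hsub
        have := hdegA v hv'
        omega
      have : (m:ℝ) + 1 ≤ ((F.filter (fun e => v ∈ e)).card : ℝ) := by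
        exact_mod_cast h1
      linarith
    · have hsub : (P'.filter (fun p => p.2 = v)).image (fun p => s(p.1, p.2))
          ⊆ F.filter (fun e => v ∈ e) := by
        intro e he
        obtain ⟨p, hp, rfl⟩ := Finset.mem_image.1 he
        rw [Finset.mem_filter] at hp ⊢
        exact ⟨Finset.mem_image_of_mem _ hp.1, hp.2 ▸ Sym2.mem_mk_right _ _⟩
      have hcard : ((P'.filter (fun p => p.2 = v)).image
          (fun p => s(p.1, p.2))).card = (P'.filter (fun p => p.2 = v)).card :=
        Finset.card_image_of_injOn (hinj.mono (by
          intro p hp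
          exact Finset.mem_coe.2 (Finset.filter_subset _ _ (Finset.mem_coe.1 hp))))
      have h1 : m < (F.filter (fun e => v ∈ e)).card := by
        have := Finset.card_le_card hsub
        have := hdegB v hv'
        omega
      have : (m:ℝ) + 1 ≤ ((F.filter (fun e => v ∈ e)).card : ℝ) := by
        exact_mod_cast h1
      linarith
  refine hnd ⟨A', B', F, hdisj, ?_, ?_, ?_, ?_, ?_⟩
  · rw [← Finset.card_pos, hFcard]
    exact hP'pos
  · intro e he
    obtain ⟨p, hp, rfl⟩ := Finset.mem_image.1 he
    exact (hadjP' p hp)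
  · intro e he
    obtain ⟨p, hp, rfl⟩ := Finset.mem_image.1 he
    exact ⟨p.1, (hmemP' p hp).1, p.2, (hmemP' p hp).2, rfl⟩
  · rw [hFcard]
    exact hdens
  · exact hdegF
end

section
/- Let γ, Q > 0 with Q ≥ 1 and let k be a positive integer. If H is a (γk, γ)-nowhere-dense finite simple graph, then every vertex set S ⊆ V(H) with |S| ≤ 2Q·k spans fewer than 8γQ²k² edges of H (i.e., the number of edges of H with both endvertices in S is less than 8γQ²k²). -/
open Finset

open scoped Classical


private lemma filter_mem_sym2_card {V : Type} [DecidableEq V] (T : Finset V) (e : Sym2 V)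
    (hd : ¬ e.IsDiag) (hT : ∀ v ∈ e, v ∈ T) :
    (T.filter (fun x => x ∈ e)).card = 2 := by
  induction e using Sym2.ind with
  | _ a b =>
    rw [Sym2.mk_isDiag_iff] at hd
    have ha := hT a (by simp)
    have hb := hT b (by simp)
    have h : T.filter (fun x => x ∈ (s(a,b) : Sym2 V)) = {a, b} := by
      ext x
      simp only [mem_filter, Sym2.mem_iff, mem_insert, mem_singleton]
      constructor
      · rintro ⟨_, h⟩; exact h
      · rintro (rfl | rfl) <;> simp [ha, hb]
    rw [h, card_pair hd]

private lemma handshake {V : Type} [DecidableEq V] (T : Finset V) (F : Finset (Sym2 V))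
    (hd : ∀ e ∈ F, ¬ e.IsDiag) (hT : ∀ e ∈ F, ∀ v ∈ e, v ∈ T) :
    ∑ v ∈ T, (F.filter (fun e => v ∈ e)).card = 2 * F.card := by
  have h1 : ∀ v ∈ T, (F.filter (fun e => v ∈ e)).card = ∑ e ∈ F, if v ∈ e then 1 else 0 := by
    intro v _; rw [Finset.card_filter]
  rw [Finset.sum_congr rfl h1, Finset.sum_comm]
  have h2 : ∀ e ∈ F, (∑ v ∈ T, if v ∈ e then 1 else 0) = 2 := by
    intro e he
    rw [← Finset.card_filter]
    exact filter_mem_sym2_card T e (hd e he) (hT e he)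
  rw [Finset.sum_congr rfl h2, Finset.sum_const, smul_eq_mul, mul_comm]

private lemma maxcut_deg {V : Type} [Fintype V] [DecidableEq V] (E : Finset (Sym2 V)) (T A : Finset V)
    (hd : ∀ e ∈ E, ¬ e.IsDiag) (hApow : A ∈ T.powerset)
    (hmax : ∀ B ∈ T.powerset,
      (E.filter (fun e => (∃ u ∈ e, u ∈ B) ∧ ∃ w ∈ e, w ∉ B)).card ≤
      (E.filter (fun e => (∃ u ∈ e, u ∈ A) ∧ ∃ w ∈ e, w ∉ A)).card)
    (v : V) (hv : v ∈ T) :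
    (E.filter (fun e => v ∈ e)).card ≤
      2 * ((E.filter (fun e => (∃ u ∈ e, u ∈ A) ∧ ∃ w ∈ e, w ∉ A)).filter
            (fun e => v ∈ e)).card := by
  set P : Finset V → Sym2 V → Prop := fun B e => (∃ u ∈ e, u ∈ B) ∧ ∃ w ∈ e, w ∉ B with hP
  set A' := if v ∈ A then A.erase v else insert v A with hA'def
  rw [mem_powerset] at hApow
  have hA'pow : A' ∈ T.powerset := by
    rw [mem_powerset]
    by_cases h : v ∈ A
    · rw [hA'def, if_pos h]; exact (erase_subset v A).trans hApow
    · rw [hA'def, if_neg h]; exact insert_subset hv hApow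
  have hvflip : (v ∈ A') ↔ ¬ (v ∈ A) := by
    by_cases h : v ∈ A <;> simp [hA'def, h]
  have hkeep : ∀ x, x ≠ v → (x ∈ A' ↔ x ∈ A) := by
    intro x hx
    by_cases h : v ∈ A <;> simp [hA'def, h, hx]
  have hsame : (E.filter (fun e => v ∉ e)).filter (P A') = (E.filter (fun e => v ∉ e)).filter (P A) := by
    apply filter_congr
    intro e he
    obtain ⟨heE, hve⟩ := mem_filter.1 he
    have hk2 : ∀ x ∈ e, (x ∈ A' ↔ x ∈ A) := fun x hx => hkeep x (fun h => hve (h ▸ hx))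
    simp only [hP]
    constructor
    · rintro ⟨⟨u, hu, hu2⟩, w, hw, hw2⟩
      exact ⟨⟨u, hu, (hk2 u hu).1 hu2⟩, ⟨w, hw, fun h => hw2 ((hk2 w hw).2 h)⟩⟩
    · rintro ⟨⟨u, hu, hu2⟩, w, hw, hw2⟩
      exact ⟨⟨u, hu, (hk2 u hu).2 hu2⟩, ⟨w, hw, fun h => hw2 ((hk2 w hw).1 h)⟩⟩
  have hflipped : ∀ e ∈ E.filter (fun e => v ∈ e), (P A' e ↔ ¬ P A e) := by
    intro e he
    obtain ⟨heE, hve⟩ := mem_filter.1 he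
    set w := Sym2.Mem.other hve with hwdef
    have hsp : s(v, w) = e := Sym2.other_spec hve
    have hwv : w ≠ v := by
      intro h
      apply hd e heE
      rw [← hsp, h, Sym2.mk_isDiag_iff]
    have hmem : ∀ x, x ∈ e ↔ x = v ∨ x = w := by
      intro x; rw [← hsp, Sym2.mem_iff]
    have hwe : w ∈ e := (hmem w).2 (Or.inr rfl)
    have hPB : ∀ B : Finset V, P B e ↔ ((v ∈ B ∨ w ∈ B) ∧ (v ∉ B ∨ w ∉ B)) := by
      intro B
      simp only [hP]
      constructor
      · rintro ⟨⟨u, hu, hu2⟩, x, hx, hx2⟩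
        rcases (hmem u).1 hu with rfl | rfl <;> rcases (hmem x).1 hx with rfl | rfl <;> tauto
      · rintro ⟨h1, h2⟩
        refine ⟨?_, ?_⟩
        · rcases h1 with h | h
          exacts [⟨v, hve, h⟩, ⟨w, hwe, h⟩]
        · rcases h2 with h | h
          exacts [⟨v, hve, h⟩, ⟨w, hwe, h⟩]
    rw [hPB A, hPB A']
    have hw' : w ∈ A' ↔ w ∈ A := hkeep w hwv
    constructor
    · rintro ⟨h1, h2⟩ ⟨h3, h4⟩
      tauto
    · intro h
      by_cases hvA : v ∈ A <;> by_cases hwA : w ∈ A <;> tauto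
  -- counting
  have hsplit : ∀ B : Finset V, (E.filter (P B)).card =
      ((E.filter (fun e => v ∈ e)).filter (P B)).card
        + ((E.filter (fun e => v ∉ e)).filter (P B)).card := by
    intro B
    have h := Finset.card_filter_add_card_filter_not
      (s := E.filter (P B)) (p := fun e => v ∈ e)
    rw [filter_comm, filter_comm (P B) (fun e => ¬ v ∈ e)] at h
    exact h.symm
  have hflipcard : ((E.filter (fun e => v ∈ e)).filter (P A')).card
      + ((E.filter (fun e => v ∈ e)).filter (P A)).card = (E.filter (fun e => v ∈ e)).card := by
    have heq : (E.filter (fun e => v ∈ e)).filter (P A')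
        = (E.filter (fun e => v ∈ e)).filter (fun e => ¬ P A e) := filter_congr hflipped
    rw [heq, add_comm]
    exact Finset.card_filter_add_card_filter_not (p := P A)
  have hineq : (E.filter (P A')).card ≤ (E.filter (P A)).card := hmax A' hA'pow
  have hs := hsame
  have hsc : ((E.filter (fun e => v ∉ e)).filter (P A')).card
      = ((E.filter (fun e => v ∉ e)).filter (P A)).card := by rw [hs]
  have hgoal : (E.filter (fun e => v ∈ e)).card
      ≤ 2 * ((E.filter (fun e => v ∈ e)).filter (P A)).card := by
    have h1 := hsplit A
    have h2 := hsplit A'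
    omega
  rw [filter_comm]
  exact hgoal

set_option maxHeartbeats 1600000 in
theorem nowhere_dense_span_bound {V : Type} [Fintype V] [DecidableEq V]
    (γ Q : ℝ) (hγ : 0 < γ) (hQpos : 0 < Q) (hQ : 1 ≤ Q) (k : ℕ) (hk : 0 < k)
    (H : SimpleGraph V) (hnd : NowhereDenseGraph H (γ * k) γ) :
    ∀ S : Set V, (S.ncard : ℝ) ≤ 2 * Q * k →
      ((({e | e ∈ H.edgeSet ∧ ∀ v ∈ e, v ∈ S} : Set (Sym2 V)).ncard : ℝ))
        < 8 * γ * Q ^ 2 * k ^ 2 := by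
  intro S hS
  by_contra hcon
  push_neg at hcon
  apply hnd
  have hkR : (1 : ℝ) ≤ (k : ℝ) := by exact_mod_cast hk
  have hkR0 : (0 : ℝ) < (k : ℝ) := by linarith
  -- the vertex set as a Finset
  have hSfin : S.Finite := Set.toFinite S
  set T : Finset V := hSfin.toFinset with hTdef
  have hmemT : ∀ x, x ∈ T ↔ x ∈ S := fun x => hSfin.mem_toFinset
  have hTcard : (T.card : ℝ) ≤ 2 * Q * k := by
    rwa [Set.ncard_eq_toFinset_card S hSfin] at hS
  -- the spanned edges as a Finset
  set E : Finset (Sym2 V) := H.edgeFinset.filter (fun e => ∀ v ∈ e, v ∈ S) with hEdef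
  have hEset : ({e | e ∈ H.edgeSet ∧ ∀ v ∈ e, v ∈ S} : Set (Sym2 V)) = ↑E := by
    ext e
    simp [hEdef, SimpleGraph.mem_edgeFinset]
  have hcon' : 8 * γ * Q ^ 2 * k ^ 2 ≤ (E.card : ℝ) := by
    rwa [hEset, Set.ncard_coe_finset] at hcon
  have hEedge : ∀ e ∈ E, e ∈ H.edgeSet := by
    intro e he
    exact SimpleGraph.mem_edgeFinset.1 (mem_of_mem_filter e he)
  have hEd : ∀ e ∈ E, ¬ e.IsDiag := fun e he => H.not_isDiag_of_mem_edgeSet (hEedge e he)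
  have hET : ∀ e ∈ E, ∀ x ∈ e, x ∈ T := by
    intro e he x hx
    exact (hmemT x).2 ((mem_filter.1 he).2 x hx)
  -- max cut
  set P : Finset V → Sym2 V → Prop := fun B e => (∃ u ∈ e, u ∈ B) ∧ ∃ w ∈ e, w ∉ B with hP
  obtain ⟨A, hApow, hAmax⟩ := Finset.exists_max_image T.powerset
    (fun B => (E.filter (P B)).card) ⟨∅, empty_mem_powerset T⟩
  have hcut : E.card ≤ 2 * (E.filter (P A)).card := by
    have hdeg : ∀ v ∈ T, (E.filter (fun e => v ∈ e)).card ≤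
        2 * ((E.filter (P A)).filter (fun e => v ∈ e)).card := by
      intro v hv
      exact maxcut_deg E T A hEd hApow hAmax v hv
    have h1 := handshake T E hEd hET
    have h2 := handshake T (E.filter (P A))
      (fun e he => hEd e (mem_of_mem_filter e he))
      (fun e he => hET e (mem_of_mem_filter e he))
    have h3 : ∑ v ∈ T, (E.filter (fun e => v ∈ e)).card ≤
        ∑ v ∈ T, 2 * ((E.filter (P A)).filter (fun e => v ∈ e)).card :=
      Finset.sum_le_sum hdeg
    rw [h1, ← Finset.mul_sum, h2] at h3
    omega
  -- triple optimization
  set φ : Finset V × Finset V × Finset (Sym2 V) → ℝ :=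
    fun t => (t.2.2.card : ℝ) - γ * k * ((t.1.card : ℝ) + (t.2.1.card : ℝ)) with hφ
  set D : Finset (Finset V × Finset V × Finset (Sym2 V)) :=
    (T.powerset ×ˢ T.powerset ×ˢ E.powerset).filter
      (fun t => Disjoint t.1 t.2.1 ∧ ∀ e ∈ t.2.2, ∃ u ∈ t.1, ∃ w ∈ t.2.1, e = s(u, w))
    with hD
  -- the base triple
  have hApow' := mem_powerset.1 hApow
  have hbaseD : (A, T \ A, E.filter (P A)) ∈ D := by
    rw [hD, mem_filter]
    refine ⟨?_, ?_, ?_⟩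
    · rw [mem_product, mem_product]
      exact ⟨hApow, mem_powerset.2 (sdiff_subset), mem_powerset.2 (filter_subset _ _)⟩
    · exact disjoint_sdiff
    · intro e he
      have heE := mem_of_mem_filter e he
      have hPe : (∃ u ∈ e, u ∈ A) ∧ ∃ w ∈ e, w ∉ A := (mem_filter.1 he).2
      obtain ⟨⟨u, hue, huA⟩, ⟨w, hwe, hwA⟩⟩ := hPe
      have hne : u ≠ w := fun h => hwA (h ▸ huA)
      exact ⟨u, huA, w, mem_sdiff.2 ⟨hET e heE w hwe, hwA⟩,
        ((Sym2.mem_and_mem_iff hne).1 ⟨hue, hwe⟩)⟩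
  have hbasecard : A.card + (T \ A).card = T.card := by
    have := card_sdiff_add_card_eq_card hApow'
    omega
  have hγk0 : (0 : ℝ) ≤ γ * k := by positivity
  have hφbase : 2 * γ * Q ^ 2 * k ^ 2 ≤ φ (A, T \ A, E.filter (P A)) := by
    have h1 : ((E.filter (P A)).card : ℝ) ≥ (E.card : ℝ) / 2 := by
      have : (E.card : ℝ) ≤ 2 * ((E.filter (P A)).card : ℝ) := by exact_mod_cast hcut
      linarith
    have h2 : ((A.card : ℝ) + ((T \ A).card : ℝ)) = (T.card : ℝ) := by exact_mod_cast hbasecard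
    simp only [hφ]
    rw [h2]
    have h3 : γ * k * (T.card : ℝ) ≤ γ * k * (2 * Q * k) :=
      mul_le_mul_of_nonneg_left hTcard hγk0
    nlinarith [mul_pos hγ hkR0, mul_le_mul_of_nonneg_left hQ (le_of_lt (mul_pos (mul_pos hγ hkR0) hkR0))]
  -- extract optimal triple
  obtain ⟨t₀, ht₀D, ht₀max⟩ := Finset.exists_max_image D φ ⟨_, hbaseD⟩
  set D' : Finset (Finset V × Finset V × Finset (Sym2 V)) :=
    D.filter (fun t => φ t₀ ≤ φ t) with hD'
  obtain ⟨t, htD', htmin⟩ := Finset.exists_min_image D'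
    (fun t => t.1.card + t.2.1.card) ⟨t₀, by rw [hD', mem_filter]; exact ⟨ht₀D, le_refl _⟩⟩
  obtain ⟨U, W, F⟩ := t
  rw [hD', mem_filter] at htD'
  obtain ⟨htD, htφ⟩ := htD'
  rw [hD, mem_filter] at htD
  obtain ⟨htprod, hdisj, hbip⟩ := htD
  rw [mem_product, mem_product] at htprod
  obtain ⟨hUpow, hWpow, hFpow⟩ := htprod
  have hUT := mem_powerset.1 hUpow
  have hWT := mem_powerset.1 hWpow
  have hFE := mem_powerset.1 hFpow
  -- basic bounds
  have hφt : 2 * γ * Q ^ 2 * k ^ 2 ≤ φ (U, W, F) :=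
    le_trans hφbase (le_trans (ht₀max _ hbaseD) htφ)
  have hUW : (U.card : ℝ) + (W.card : ℝ) ≤ 2 * Q * k := by
    have h1 : U.card + W.card = (U ∪ W).card := (card_union_of_disjoint hdisj).symm
    have h2 : (U ∪ W).card ≤ T.card := card_le_card (union_subset hUT hWT)
    have : ((U.card + W.card : ℕ) : ℝ) ≤ (T.card : ℝ) := by
      exact_mod_cast h1 ▸ h2
    push_cast at this
    linarith
  have hFbig : 2 * γ * Q ^ 2 * k ^ 2 ≤ (F.card : ℝ) := by
    simp only [hφ] at hφt
    have h0 : 0 ≤ γ * k * ((U.card : ℝ) + (W.card : ℝ)) :=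
      mul_nonneg hγk0 (add_nonneg (Nat.cast_nonneg _) (Nat.cast_nonneg _))
    linarith
  -- min degree
  have hmindeg : ∀ v ∈ U ∪ W, γ * k < ((F.filter (fun e => v ∈ e)).card : ℝ) := by
    intro v hvUW
    by_contra hle
    push_neg at hle
    set F' := F.filter (fun e => v ∉ e) with hF'
    set U' := U.erase v with hU'
    set W' := W.erase v with hW'
    have hd_split : (F.filter (fun e => v ∈ e)).card + F'.card = F.card :=
      Finset.card_filter_add_card_filter_not (p := fun e => v ∈ e)
    have hcard' : U'.card + W'.card + 1 = U.card + W.card := by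
      rcases mem_union.1 hvUW with h | h
      · have hvW : v ∉ W := disjoint_left.1 hdisj h
        have h1 : U'.card = U.card - 1 := card_erase_of_mem h
        have h2 : W' = W := erase_eq_of_notMem hvW
        have h3 : 1 ≤ U.card := card_pos.2 ⟨v, h⟩
        rw [h1, h2]; omega
      · have hvU : v ∉ U := disjoint_right.1 hdisj h
        have h1 : W'.card = W.card - 1 := card_erase_of_mem h
        have h2 : U' = U := erase_eq_of_notMem hvU
        have h3 : 1 ≤ W.card := card_pos.2 ⟨v, h⟩
        rw [h1, h2]; omega
    have ht'D : (U', W', F') ∈ D := by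
      rw [hD, mem_filter]
      refine ⟨?_, ?_, ?_⟩
      · rw [mem_product, mem_product]
        exact ⟨mem_powerset.2 ((erase_subset v U).trans hUT),
          mem_powerset.2 ((erase_subset v W).trans hWT),
          mem_powerset.2 ((filter_subset _ _).trans hFE)⟩
      · exact hdisj.mono (erase_subset v U) (erase_subset v W)
      · intro e he
        obtain ⟨heF, hve⟩ := mem_filter.1 he
        obtain ⟨u, hu, w, hw, rfl⟩ := hbip e heF
        have huv : u ≠ v := fun h => hve (h ▸ Sym2.mem_mk_left u w)
        have hwv : w ≠ v := fun h => hve (h ▸ Sym2.mem_mk_right u w)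
        exact ⟨u, mem_erase.2 ⟨huv, hu⟩, w, mem_erase.2 ⟨hwv, hw⟩, rfl⟩
    have hφ' : φ t₀ ≤ φ (U', W', F') := by
      have hc1 : ((F'.card : ℕ) : ℝ) = (F.card : ℝ) - ((F.filter (fun e => v ∈ e)).card : ℝ) := by
        have h := congrArg (fun n : ℕ => (n : ℝ)) hd_split
        push_cast at h
        linarith
      have hc2 : ((U'.card : ℝ) + (W'.card : ℝ)) = (U.card : ℝ) + (W.card : ℝ) - 1 := by
        have h := congrArg (fun n : ℕ => (n : ℝ)) hcard'
        push_cast at h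
        linarith
      have h1 : φ t₀ ≤ φ (U, W, F) := htφ
      simp only [hφ] at h1 ⊢
      rw [hc1, hc2]
      linarith
    have hsz := htmin (U', W', F') (by rw [hD', mem_filter]; exact ⟨ht'D, hφ'⟩)
    simp only at hsz
    omega
  -- assemble the dense spot
  refine ⟨U, W, F, hdisj, ?_, fun e he => hEedge e (hFE he), hbip, ?_, ?_⟩
  · have hpos : (0:ℝ) < 2 * γ * Q ^ 2 * k ^ 2 :=
      mul_pos (mul_pos (mul_pos two_pos hγ) (pow_pos hQpos 2)) (pow_pos hkR0 2)
    have : (0:ℝ) < (F.card : ℝ) := lt_of_lt_of_le hpos hFbig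
    exact card_pos.1 (by exact_mod_cast this)
  · -- density
    clear hmindeg hbip hdisj htmin htφ hbaseD ht₀D ht₀max hφbase hφt hAmax hApow hbasecard hcut hEset hmemT hcon hcon' hS hEedge hEd hET hnd
    have hU0 : (0 : ℝ) ≤ U.card := Nat.cast_nonneg _
    have hW0 : (0 : ℝ) ≤ W.card := Nat.cast_nonneg _
    have h2Qk : (0:ℝ) ≤ 2 * Q * k := by nlinarith [mul_pos hQpos hkR0]
    have hAM : (U.card : ℝ) * W.card ≤ (Q * k) ^ 2 := by
      nlinarith [sq_nonneg ((U.card : ℝ) - (W.card : ℝ)),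
        mul_le_mul hUW hUW (add_nonneg hU0 hW0) h2Qk]
    have hpos : (0:ℝ) < γ * (Q * k) ^ 2 :=
      mul_pos hγ (pow_pos (mul_pos hQpos hkR0) 2)
    nlinarith [mul_le_mul_of_nonneg_left hAM hγ.le]
  · intro v hv
    have hset : ({e | e ∈ F ∧ v ∈ e} : Set (Sym2 V)) = ↑(F.filter (fun e => v ∈ e)) := by
      ext e; simp
    rw [hset, Set.ncard_coe_finset]
    exact hmindeg v hv
end

section
/- Let δ, η > 0, let Ω*, Ω**, h, k > 0, let G be an n-vertex finite simple graph, let X₀, X₁, Y ⊆ V(G), and let 𝒞 be a finite family of subsets of V(G) such that: (1) 20(δ + 2/√(Ω**)) < η; (2) 2kn ≥ e(X₀, X₁) ≥ ηkn; (3) every vertex of X₀ has at least Ω**·k neighbours in X₁; (4) every vertex of X₁ has degree at most Ω*·k in G; (5) |Y| < ηn/(4Ω*); and (6) 10·h·|𝒞|·Ω* < ηn. Then there are sets X₀' ⊆ X₀ and X₁' ⊆ X₁ ∖ Y such that: (a) every vertex of X₀' has at least √(Ω**)·k neighbours in X₁'; (b) every vertex of X₁' has at least δ·k neighbours in X₀';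 (c) for all C ∈ 𝒞, either X₁' ∩ C = ∅ or |X₁' ∩ C| ≥ h; and (d) e(X₀', X₁') ≥ ηkn/2. -/
noncomputable def fullDeg {V : Type} (G : SimpleGraph V) (v : V) : ℕ :=
  ({w | G.Adj v w} : Set V).ncard

open Finset Classical in
lemma deg_eq {V : Type} (G : SimpleGraph V) (v : V) (U : Finset V) :
    deg G v U = (U.filter (fun w => G.Adj v w)).card := by
  rw [deg, ← Set.ncard_coe_finset]
  congr 1; ext w; simp

open Finset Classical in
lemma fullDeg_eq {V : Type} [Fintype V] (G : SimpleGraph V) (v : V) :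
    fullDeg G v = (Finset.univ.filter (fun w => G.Adj v w)).card := by
  rw [fullDeg, ← Set.ncard_coe_finset]
  congr 1; ext w; simp

open Finset Classical in
lemma deg_le_fullDeg {V : Type} [Fintype V] (G : SimpleGraph V) (v : V) (U : Finset V) :
    deg G v U ≤ fullDeg G v := by
  rw [deg_eq, fullDeg_eq]
  exact card_le_card (filter_subset_filter _ (subset_univ U))

open Finset Classical in
lemma deg_mono {V : Type} (G : SimpleGraph V) (v : V) {U U' : Finset V} (h : U' ⊆ U) :
    deg G v U' ≤ deg G v U := by
  rw [deg_eq, deg_eq]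
  exact card_le_card (filter_subset_filter _ h)

open Finset Classical in
lemma epairs_eq_sum_left {V : Type} (G : SimpleGraph V) (X Y : Finset V) :
    epairs G X Y = ∑ x ∈ X, deg G x Y := by
  rw [epairs]
  have : ({p : V × V | p.1 ∈ X ∧ p.2 ∈ Y ∧ G.Adj p.1 p.2} : Set (V × V)) =
      ↑((X ×ˢ Y).filter (fun p => G.Adj p.1 p.2)) := by
    ext p; simp [Finset.mem_product, and_assoc]
  rw [this, Set.ncard_coe_finset, Finset.card_filter, Finset.sum_product]
  refine Finset.sum_congr rfl fun x _ => ?_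
  rw [deg_eq, Finset.card_filter]

open Finset Classical in
lemma epairs_eq_sum_right {V : Type} (G : SimpleGraph V) (X Y : Finset V) :
    epairs G X Y = ∑ y ∈ Y, deg G y X := by
  rw [epairs_eq_sum_left]
  rw [show ∀ (f : V → ℕ), ∑ x ∈ X, f x = ∑ x ∈ X, f x from fun _ => rfl]
  have : ∀ x ∈ X, (deg G x Y : ℕ) = ∑ y ∈ Y, if G.Adj x y then 1 else 0 := by
    intro x _; rw [deg_eq, Finset.card_filter]
  rw [Finset.sum_congr rfl this, Finset.sum_comm]
  refine Finset.sum_congr rfl fun y _ => ?_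
  rw [deg_eq, Finset.card_filter]
  refine Finset.sum_congr rfl fun x _ => ?_
  simp [SimpleGraph.adj_comm]

open Finset Classical in
lemma epairs_erase_left {V : Type} [DecidableEq V] (G : SimpleGraph V) {X : Finset V}
    (Y : Finset V) {a : V} (ha : a ∈ X) :
    epairs G X Y = deg G a Y + epairs G (X.erase a) Y := by
  rw [epairs_eq_sum_left, epairs_eq_sum_left]
  exact (Finset.add_sum_erase _ _ ha).symm

open Finset Classical in
lemma epairs_erase_right {V : Type} [DecidableEq V] (G : SimpleGraph V) (X : Finset V)
    {Y : Finset V} {b : V} (hb : b ∈ Y) :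
    epairs G X Y = deg G b X + epairs G X (Y.erase b) := by
  rw [epairs_eq_sum_right, epairs_eq_sum_right]
  exact (Finset.add_sum_erase _ _ hb).symm

open Finset Classical in
lemma epairs_sdiff {V : Type} [DecidableEq V] (G : SimpleGraph V) (X Y C : Finset V) :
    epairs G X Y = epairs G X (Y \ C) + epairs G X (Y ∩ C) := by
  rw [epairs_eq_sum_right, epairs_eq_sum_right, epairs_eq_sum_right,
    ← Finset.sum_union (Finset.disjoint_sdiff_inter Y C), Finset.sdiff_union_inter]

open Finset Classical in
lemma clean_ind {V : Type} [Fintype V] [DecidableEq V] (G : SimpleGraph V)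
    (δ Ωs Ωss h k T : ℝ) (hδ : 0 < δ) (hΩs : 0 < Ωs) (hΩss : 0 < Ωss) (hh : 0 < h)
    (hk : 0 < k) (𝒞 : Finset (Finset V)) :
    ∀ n (A B : Finset V), A.card + B.card = n →
    (∀ v ∈ B, (fullDeg G v : ℝ) ≤ Ωs * k) →
    (T + Real.sqrt Ωss * k * A.card + δ * k * B.card
      + h * Ωs * k * ((𝒞.filter fun C => (B ∩ C).Nonempty).card) ≤ (epairs G A B : ℝ)) →
    ∃ A' ⊆ A, ∃ B' ⊆ B,
      (∀ v ∈ A', Real.sqrt Ωss * k ≤ (deg G v B' : ℝ)) ∧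
      (∀ v ∈ B', δ * k ≤ (deg G v A' : ℝ)) ∧
      (∀ C ∈ 𝒞, B' ∩ C = ∅ ∨ h ≤ ((B' ∩ C).card : ℝ)) ∧
      T ≤ (epairs G A' B' : ℝ) := by
  intro n
  induction n using Nat.strong_induction_on with
  | _ n ih =>
  intro A B hn hB4 hinv
  have hs : 0 < Real.sqrt Ωss := Real.sqrt_pos.mpr hΩss
  by_cases hA : ∃ a ∈ A, (deg G a B : ℝ) < Real.sqrt Ωss * k
  · obtain ⟨a, haA, hda⟩ := hA
    have hA1 : 1 ≤ A.card := Finset.card_pos.mpr ⟨a, haA⟩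
    have hce : (A.erase a).card = A.card - 1 := Finset.card_erase_of_mem haA
    have hlt : (A.erase a).card + B.card < n := by omega
    have hE : (epairs G A B : ℝ) = (deg G a B : ℝ) + (epairs G (A.erase a) B : ℝ) := by
      exact_mod_cast congrArg (Nat.cast (R := ℝ)) (epairs_erase_left G B haA)
    have hcer : ((A.erase a).card : ℝ) = (A.card : ℝ) - 1 := by
      rw [hce]; push_cast [hA1]; ring
    have hinv' : T + Real.sqrt Ωss * k * (A.erase a).card + δ * k * B.card
        + h * Ωs * k * ((𝒞.filter fun C => (B ∩ C).Nonempty).card)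
        ≤ (epairs G (A.erase a) B : ℝ) := by
      rw [hcer]; nlinarith [hinv, hda, hE]
    obtain ⟨A', hA', B', hB', c1, c2, c3, c4⟩ := ih _ hlt (A.erase a) B rfl hB4 hinv'
    exact ⟨A', hA'.trans (Finset.erase_subset _ _), B', hB', c1, c2, c3, c4⟩
  · by_cases hB : ∃ b ∈ B, (deg G b A : ℝ) < δ * k
    · obtain ⟨b, hbB, hdb⟩ := hB
      have hB1 : 1 ≤ B.card := Finset.card_pos.mpr ⟨b, hbB⟩
      have hce : (B.erase b).card = B.card - 1 := Finset.card_erase_of_mem hbB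
      have hlt : A.card + (B.erase b).card < n := by omega
      have hE : (epairs G A B : ℝ) = (deg G b A : ℝ) + (epairs G A (B.erase b) : ℝ) := by
        exact_mod_cast congrArg (Nat.cast (R := ℝ)) (epairs_erase_right G A hbB)
      have hcer : ((B.erase b).card : ℝ) = (B.card : ℝ) - 1 := by
        rw [hce]; push_cast [hB1]; ring
      have hfil : ((𝒞.filter fun C => ((B.erase b) ∩ C).Nonempty).card : ℝ)
          ≤ ((𝒞.filter fun C => (B ∩ C).Nonempty).card : ℝ) := by
        have : (𝒞.filter fun C => ((B.erase b) ∩ C).Nonempty)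
            ⊆ (𝒞.filter fun C => (B ∩ C).Nonempty) := by
          intro C hC
          simp only [Finset.mem_filter] at hC ⊢
          exact ⟨hC.1, hC.2.mono (Finset.inter_subset_inter (Finset.erase_subset _ _)
            (Finset.Subset.refl _))⟩
        exact_mod_cast Finset.card_le_card this
      have hinv' : T + Real.sqrt Ωss * k * A.card + δ * k * (B.erase b).card
          + h * Ωs * k * ((𝒞.filter fun C => ((B.erase b) ∩ C).Nonempty).card)
          ≤ (epairs G A (B.erase b) : ℝ) := by
        have hhk : 0 ≤ h * Ωs * k := by positivity
        rw [hcer]; nlinarith [hinv, hdb, hE, mul_le_mul_of_nonneg_left hfil hhk]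
      obtain ⟨A', hA', B', hB', c1, c2, c3, c4⟩ := ih _ hlt A (B.erase b) rfl
        (fun v hv => hB4 v (Finset.erase_subset _ _ hv)) hinv'
      exact ⟨A', hA', B', hB'.trans (Finset.erase_subset _ _), c1, c2, c3, c4⟩
    · by_cases hC : ∃ C ∈ 𝒞, (B ∩ C).Nonempty ∧ ((B ∩ C).card : ℝ) < h
      · obtain ⟨C, hCm, hne, hclt⟩ := hC
        have hi1 : 1 ≤ (B ∩ C).card := Finset.card_pos.mpr hne
        have hsp : (B \ C).card + (B ∩ C).card = B.card :=
          Finset.card_sdiff_add_card_inter B C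
        have hlt : A.card + (B \ C).card < n := by omega
        have hE : (epairs G A B : ℝ)
            = (epairs G A (B \ C) : ℝ) + (epairs G A (B ∩ C) : ℝ) := by
          exact_mod_cast congrArg (Nat.cast (R := ℝ)) (epairs_sdiff G A B C)
        -- edges into B ∩ C are few
        have hE2 : (epairs G A (B ∩ C) : ℝ) ≤ ((B ∩ C).card : ℝ) * (Ωs * k) := by
          rw [epairs_eq_sum_right]
          push_cast
          calc ∑ y ∈ B ∩ C, (deg G y A : ℝ)
              ≤ ∑ y ∈ B ∩ C, (fullDeg G y : ℝ) := by
                refine Finset.sum_le_sum fun y _ => ?_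
                exact_mod_cast deg_le_fullDeg G y A
            _ ≤ ∑ y ∈ B ∩ C, Ωs * k := by
                refine Finset.sum_le_sum fun y hy => ?_
                exact hB4 y (Finset.mem_of_mem_inter_left hy)
            _ = ((B ∩ C).card : ℝ) * (Ωs * k) := by
                rw [Finset.sum_const, nsmul_eq_mul]
        have hE2' : (epairs G A (B ∩ C) : ℝ) ≤ h * Ωs * k := by
          have hΩk : 0 < Ωs * k := by positivity
          nlinarith [hE2, hclt]
        -- the filter loses C
        have hfil : ((𝒞.filter fun C' => ((B \ C) ∩ C').Nonempty).card : ℝ)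
            ≤ ((𝒞.filter fun C' => (B ∩ C').Nonempty).card : ℝ) - 1 := by
          have hCin : C ∈ 𝒞.filter fun C' => (B ∩ C').Nonempty :=
            Finset.mem_filter.mpr ⟨hCm, hne⟩
          have hsub : (𝒞.filter fun C' => ((B \ C) ∩ C').Nonempty)
              ⊆ (𝒞.filter fun C' => (B ∩ C').Nonempty).erase C := by
            intro C' hC'
            simp only [Finset.mem_filter] at hC'
            rw [Finset.mem_erase, Finset.mem_filter]
            refine ⟨?_, hC'.1, hC'.2.mono (Finset.inter_subset_inter Finset.sdiff_subset
              (Finset.Subset.refl _))⟩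
            rintro rfl
            obtain ⟨x, hx⟩ := hC'.2
            rw [Finset.mem_inter, Finset.mem_sdiff] at hx
            exact hx.1.2 hx.2
          have h1le : 1 ≤ (𝒞.filter fun C' => (B ∩ C').Nonempty).card :=
            Finset.card_pos.mpr ⟨C, hCin⟩
          have := Finset.card_le_card hsub
          rw [Finset.card_erase_of_mem hCin] at this
          have : (𝒞.filter fun C' => ((B \ C) ∩ C').Nonempty).card + 1
              ≤ (𝒞.filter fun C' => (B ∩ C').Nonempty).card := by omega
          have := (Nat.cast_le (α := ℝ)).mpr this
          push_cast at this
          linarith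
        have hinv' : T + Real.sqrt Ωss * k * A.card + δ * k * (B \ C).card
            + h * Ωs * k * ((𝒞.filter fun C' => ((B \ C) ∩ C').Nonempty).card)
            ≤ (epairs G A (B \ C) : ℝ) := by
          have hhk : 0 ≤ h * Ωs * k := by positivity
          have hcardle : ((B \ C).card : ℝ) ≤ (B.card : ℝ) := by
            exact_mod_cast Finset.card_le_card (Finset.sdiff_subset)
          have hδk : 0 ≤ δ * k := by positivity
          nlinarith [hinv, hE, hE2', mul_le_mul_of_nonneg_left hfil hhk,
            mul_le_mul_of_nonneg_left hcardle hδk]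
        obtain ⟨A', hA', B', hB', c1, c2, c3, c4⟩ := ih _ hlt A (B \ C) rfl
          (fun v hv => hB4 v (Finset.sdiff_subset hv)) hinv'
        exact ⟨A', hA', B', hB'.trans Finset.sdiff_subset, c1, c2, c3, c4⟩
      · push_neg at hA hB hC
        refine ⟨A, Finset.Subset.refl A, B, Finset.Subset.refl B, hA, hB, ?_, ?_⟩
        · intro C hCm
          by_cases hne : (B ∩ C).Nonempty
          · exact Or.inr (hC C hCm hne)
          · exact Or.inl (Finset.not_nonempty_iff_eq_empty.mp hne)
        · have t1 : 0 ≤ Real.sqrt Ωss * k * A.card := by positivity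
          have t2 : 0 ≤ δ * k * B.card := by positivity
          have t3 : 0 ≤ h * Ωs * k * ((𝒞.filter fun C => (B ∩ C).Nonempty).card : ℝ) := by
            positivity
          linarith

open Finset Classical in
theorem clean_with_huge_and_black
    (δ η Ωs Ωss h k : ℝ) (hδ : 0 < δ) (hη : 0 < η) (hΩs : 0 < Ωs) (hΩss : 0 < Ωss)
    (hh : 0 < h) (hk : 0 < k)
    {V : Type} [Fintype V] [DecidableEq V] (G : SimpleGraph V)
    (X0 X1 Y : Finset V) (𝒞 : Finset (Finset V))
    (h1 : 20 * (δ + 2 / Real.sqrt Ωss) < η)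
    (h2 : (epairs G X0 X1 : ℝ) ≤ 2 * k * (Fintype.card V : ℝ) ∧
          η * k * (Fintype.card V : ℝ) ≤ (epairs G X0 X1 : ℝ))
    (h3 : ∀ v ∈ X0, Ωss * k ≤ (deg G v X1 : ℝ))
    (h4 : ∀ v ∈ X1, (fullDeg G v : ℝ) ≤ Ωs * k)
    (h5 : (Y.card : ℝ) < η * (Fintype.card V : ℝ) / (4 * Ωs))
    (h6 : 10 * h * (𝒞.card : ℝ) * Ωs < η * (Fintype.card V : ℝ)) :
    ∃ X0' ⊆ X0, ∃ X1' ⊆ X1 \ Y,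
      (∀ v ∈ X0', Real.sqrt Ωss * k ≤ (deg G v X1' : ℝ)) ∧
      (∀ v ∈ X1', δ * k ≤ (deg G v X0' : ℝ)) ∧
      (∀ C ∈ 𝒞, X1' ∩ C = ∅ ∨ h ≤ ((X1' ∩ C).card : ℝ)) ∧
      η * k * (Fintype.card V : ℝ) / 2 ≤ (epairs G X0' X1' : ℝ) := by
  set nV : ℝ := (Fintype.card V : ℝ) with hnV
  have hn0 : 0 ≤ nV := by positivity
  have hs : 0 < Real.sqrt Ωss := Real.sqrt_pos.mpr hΩss
  have hss : Real.sqrt Ωss * Real.sqrt Ωss = Ωss := Real.mul_self_sqrt hΩss.le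
  -- split edges
  have hE : (epairs G X0 X1 : ℝ)
      = (epairs G X0 (X1 \ Y) : ℝ) + (epairs G X0 (X1 ∩ Y) : ℝ) := by
    exact_mod_cast congrArg (Nat.cast (R := ℝ)) (epairs_sdiff G X0 X1 Y)
  -- edges into Y are few
  have hEY : (epairs G X0 (X1 ∩ Y) : ℝ) ≤ (Y.card : ℝ) * (Ωs * k) := by
    rw [epairs_eq_sum_right]
    push_cast
    calc ∑ y ∈ X1 ∩ Y, (deg G y X0 : ℝ)
        ≤ ∑ y ∈ X1 ∩ Y, (fullDeg G y : ℝ) := by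
          refine Finset.sum_le_sum fun y _ => ?_
          exact_mod_cast deg_le_fullDeg G y X0
      _ ≤ ∑ y ∈ X1 ∩ Y, Ωs * k := by
          refine Finset.sum_le_sum fun y hy => ?_
          exact h4 y (Finset.mem_of_mem_inter_left hy)
      _ = ((X1 ∩ Y).card : ℝ) * (Ωs * k) := by rw [Finset.sum_const, nsmul_eq_mul]
      _ ≤ (Y.card : ℝ) * (Ωs * k) := by
          have : ((X1 ∩ Y).card : ℝ) ≤ (Y.card : ℝ) := by
            exact_mod_cast Finset.card_le_card (Finset.inter_subset_right)
          exact mul_le_mul_of_nonneg_right this (by positivity)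
  have hEY' : (epairs G X0 (X1 ∩ Y) : ℝ) < η * k * nV / 4 := by
    have heq : η * nV / (4 * Ωs) * (Ωs * k) = η * k * nV / 4 := by
      field_simp
    have hΩk : 0 < Ωs * k := by positivity
    linarith [hEY, heq ▸ mul_lt_mul_of_pos_right h5 hΩk]
  -- X0 is small
  have hX0 : Ωss * k * (X0.card : ℝ) ≤ 2 * k * nV := by
    have hlow : (X0.card : ℝ) * (Ωss * k) ≤ (epairs G X0 X1 : ℝ) := by
      rw [epairs_eq_sum_left]
      push_cast
      calc (X0.card : ℝ) * (Ωss * k) = ∑ _x ∈ X0, Ωss * k := by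
            rw [Finset.sum_const, nsmul_eq_mul]
        _ ≤ ∑ x ∈ X0, (deg G x X1 : ℝ) := Finset.sum_le_sum h3
    nlinarith [hlow, h2.1]
  -- piece (c): sqrt Ωss k |X0| + δ k |X1\Y| ≤ η k n / 20
  have h1' : 20 * δ * Real.sqrt Ωss + 40 < η * Real.sqrt Ωss := by
    have h2s : 2 / Real.sqrt Ωss * Real.sqrt Ωss = 2 :=
      div_mul_cancel₀ 2 (ne_of_gt hs)
    nlinarith [mul_lt_mul_of_pos_right h1 hs, h2s]
  have hc1n : ((X1 \ Y).card : ℝ) ≤ nV := by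
    rw [hnV]
    exact_mod_cast Finset.card_le_univ _
  have hpieceC : Real.sqrt Ωss * k * (X0.card : ℝ) + δ * k * ((X1 \ Y).card : ℝ)
      ≤ η * k * nV / 20 := by
    set s := Real.sqrt Ωss with hsdef
    have hp1 : s * (s * k * (X0.card : ℝ)) ≤ 2 * k * nV := by
      have : s * (s * k * (X0.card : ℝ)) = Ωss * k * (X0.card : ℝ) := by
        rw [← hss]; ring
      linarith [hX0, this]
    have key : 20 * s * (s * k * (X0.card : ℝ) + δ * k * ((X1 \ Y).card : ℝ))
        ≤ 20 * s * (η * k * nV / 20) := by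
      have hkn : 0 ≤ k * nV := by positivity
      have e2 : 20 * (s * (s * k * (X0.card : ℝ))) ≤ 40 * (k * nV) := by linarith
      have e3 : (20 * δ * s) * (k * ((X1 \ Y).card : ℝ)) ≤ (20 * δ * s) * (k * nV) :=
        mul_le_mul_of_nonneg_left (mul_le_mul_of_nonneg_left hc1n hk.le) (by positivity)
      have e4 := mul_le_mul_of_nonneg_right h1'.le hkn
      linarith [e2, e3, e4]
    have h20s : 0 < 20 * s := by positivity
    exact le_of_mul_le_mul_left key h20s
  -- piece (b): black clusters budget
  have hpieceB : h * Ωs * k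
      * ((𝒞.filter fun C => ((X1 \ Y) ∩ C).Nonempty).card : ℝ) ≤ η * k * nV / 10 := by
    have hfc : ((𝒞.filter fun C => ((X1 \ Y) ∩ C).Nonempty).card : ℝ) ≤ (𝒞.card : ℝ) := by
      exact_mod_cast Finset.card_le_card (Finset.filter_subset _ _)
    have hhk : 0 ≤ h * Ωs * k := by positivity
    nlinarith [mul_le_mul_of_nonneg_left hfc hhk, mul_lt_mul_of_pos_right h6 hk]
  -- initial invariant
  have hinv : η * k * nV / 2 + Real.sqrt Ωss * k * (X0.card : ℝ)
      + δ * k * ((X1 \ Y).card : ℝ)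
      + h * Ωs * k * ((𝒞.filter fun C => ((X1 \ Y) ∩ C).Nonempty).card : ℝ)
      ≤ (epairs G X0 (X1 \ Y) : ℝ) := by
    linarith [h2.2, hE, hEY', hpieceC, hpieceB]
  exact clean_ind G δ Ωs Ωss h k (η * k * nV / 2) hδ hΩs hΩss hh hk 𝒞
    (X0.card + (X1 \ Y).card) X0 (X1 \ Y) rfl
    (fun v hv => h4 v (Finset.mem_sdiff.mp hv).1) hinv
end
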